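/- arXiv:1401.5398 — 4 statements merged into one kernel-verified Lean document; each statement's English description precedes it below -/
import Mathlib

section
/- Let a ∈ (0,1) and let θ have the marginal Dirichlet–Laplace density Π(θ) = (1/(2^{(1+a)/2} Γ(a))) |θ|^{(a-1)/2} K_{1-a}(√(2|θ|)) on ℝ, where K_ν is the modified Bessel function of the second kind. Then Π(θ) → ∞ as θ → 0; i.e., the density is unbounded with a singularity at zero. -/
open Real MeasureTheory Filter Set
open scoped Topology

/-! At `x = √(2|θ|)` the factor `|θ|^{(a-1)/2}` cancels the `x^{1-a}` in front of the integral
representation of `K_{1-a}(x)`, so `Π(θ)` is a positive multiple of `∫₀^∞ cos t / (t² + x²)^p dt`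
with `p = 3/2 - a > 1/2`. This integral is at least a multiple of `x^{1-2p}` minus a constant: on
`(0, x]` the integrand is at least `cos 1 / (2x²)^p`, it is nonnegative on `(0, 1]`, and its tail
over `(1, ∞)` is bounded below by `-∫₁^∞ t^{-2p} dt`. -/

/-- Modified Bessel function of the second kind, via the integral representation
`K_ν(x) = Γ(ν+1/2)(2x)^ν/√π ∫_0^∞ cos t/(t²+x²)^{ν+1/2} dt`. -/
noncomputable def besselK (ν x : ℝ) : ℝ :=
  Real.Gamma (ν + 1/2) * (2*x) ^ ν / Real.sqrt π *
    ∫ t in Set.Ioi (0:ℝ), Real.cos t / (t^2 + x^2) ^ (ν + 1/2)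

/-- Marginal Dirichlet–Laplace density with parameter `a`. -/
noncomputable def dlDensity (a θ : ℝ) : ℝ :=
  (1 / (2 ^ ((1+a)/2) * Real.Gamma a)) * |θ| ^ ((a-1)/2) *
    besselK (1-a) (Real.sqrt (2*|θ|))

noncomputable def besselKIntegral (p x : ℝ) : ℝ :=
  ∫ t in Ioi (0:ℝ), cos t / (t ^ 2 + x ^ 2) ^ p

lemma sq_add_sq_pos {x : ℝ} (hx : x ≠ 0) (t : ℝ) : 0 < t ^ 2 + x ^ 2 := by positivity

lemma continuous_cos_div_sq_add_sq_rpow (p : ℝ) {x : ℝ} (hx : x ≠ 0) :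
    Continuous fun t : ℝ => cos t / (t ^ 2 + x ^ 2) ^ p :=
  continuous_cos.div
    ((continuous_pow 2).add continuous_const |>.rpow_const fun t =>
      Or.inl (sq_add_sq_pos hx t).ne')
    fun t => (rpow_pos_of_pos (sq_add_sq_pos hx t) p).ne'

lemma abs_cos_div_sq_add_sq_rpow_le {p : ℝ} (hp : 0 ≤ p) (x : ℝ) {t : ℝ} (ht : 0 < t) :
    |cos t / (t ^ 2 + x ^ 2) ^ p| ≤ t ^ (-(2 * p)) := by
  have hsq : t ^ (2 * p) = (t ^ 2) ^ p := by
    rw [← rpow_natCast, ← rpow_mul ht.le, Nat.cast_ofNat]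
  have hle : t ^ (2 * p) ≤ (t ^ 2 + x ^ 2) ^ p :=
    hsq ▸ rpow_le_rpow (by positivity) (by nlinarith [sq_nonneg x]) hp
  have hden : 0 < t ^ 2 + x ^ 2 := add_pos_of_pos_of_nonneg (pow_pos ht 2) (sq_nonneg x)
  rw [abs_div, abs_of_pos (rpow_pos_of_pos hden p), rpow_neg ht.le, inv_eq_one_div]
  exact div_le_div₀ zero_le_one (abs_cos_le_one t) (rpow_pos_of_pos ht _) hle

lemma integrableOn_cos_div_sq_add_sq_rpow {p x : ℝ} (hp : 1 / 2 < p) (hx : x ≠ 0) :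
    IntegrableOn (fun t => cos t / (t ^ 2 + x ^ 2) ^ p) (Ioi 0) := by
  have hc := continuous_cos_div_sq_add_sq_rpow p hx
  rw [← Ioc_union_Ioi_eq_Ioi zero_le_one]
  refine (hc.integrableOn_Icc.mono_set Ioc_subset_Icc_self).union ?_
  refine (integrableOn_Ioi_rpow_of_lt (by linarith : -(2 * p) < -1) one_pos).mono'
    hc.aestronglyMeasurable.restrict ?_
  filter_upwards [ae_restrict_mem measurableSet_Ioi] with t ht
  exact abs_cos_div_sq_add_sq_rpow_le (by linarith) x (one_pos.trans ht)

lemma neg_inv_le_setIntegral_Ioi_one {p x : ℝ} (hp : 1 / 2 < p) (hx : x ≠ 0) :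
    -(2 * p - 1)⁻¹ ≤ ∫ t in Ioi 1, cos t / (t ^ 2 + x ^ 2) ^ p := by
  have hbound : ∫ t in Ioi (1:ℝ), -t ^ (-(2 * p)) ≤
      ∫ t in Ioi 1, cos t / (t ^ 2 + x ^ 2) ^ p := by
    refine setIntegral_mono_on
      (integrableOn_Ioi_rpow_of_lt (by linarith) one_pos).neg
      ((integrableOn_cos_div_sq_add_sq_rpow hp hx).mono_set (Ioi_subset_Ioi zero_le_one))
      measurableSet_Ioi fun t ht => ?_
    exact neg_le_of_abs_le (abs_cos_div_sq_add_sq_rpow_le (by linarith) x (one_pos.trans ht))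
  rw [integral_neg, integral_Ioi_rpow_of_lt (by linarith) one_pos, one_rpow] at hbound
  convert hbound using 1
  rw [neg_div, neg_neg, one_div, ← neg_sub, inv_neg]
  ring_nf

lemma le_setIntegral_Ioc_zero_one {p x : ℝ} (hp : 0 ≤ p) (hx : 0 < x) (hx1 : x ≤ 1) :
    cos 1 * 2 ^ (-p) * x ^ (1 - 2 * p) ≤ ∫ t in Ioc 0 1, cos t / (t ^ 2 + x ^ 2) ^ p := by
  have hcos : ∀ t ∈ Ioc (0:ℝ) 1, cos 1 ≤ cos t := fun t ht =>
    cos_le_cos_of_nonneg_of_le_pi ht.1.le (by linarith [pi_gt_three]) ht.2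
  have hint : IntegrableOn (fun t => cos t / (t ^ 2 + x ^ 2) ^ p) (Ioc 0 1) :=
    (continuous_cos_div_sq_add_sq_rpow p hx.ne').integrableOn_Icc.mono_set Ioc_subset_Icc_self
  calc cos 1 * 2 ^ (-p) * x ^ (1 - 2 * p)
      = cos 1 / (2 * x ^ 2) ^ p * volume.real (Ioc 0 x) := by
        rw [Real.volume_real_Ioc_of_le hx.le, sub_zero, mul_rpow zero_le_two (by positivity),
          ← rpow_natCast, ← rpow_mul hx.le, rpow_neg zero_le_two,
          show (1:ℝ) - 2 * p = -(↑(2:ℕ) * p) + 1 by push_cast; ring, rpow_add_one hx.ne',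
          rpow_neg hx.le]
        field_simp
    _ ≤ ∫ t in Ioc 0 x, cos t / (t ^ 2 + x ^ 2) ^ p := by
        refine setIntegral_ge_of_const_le_real measurableSet_Ioc measure_Ioc_lt_top.ne
          (fun t ht => ?_) (hint.mono_set (Ioc_subset_Ioc_right hx1))
        have hle : (t ^ 2 + x ^ 2) ^ p ≤ (2 * x ^ 2) ^ p :=
          rpow_le_rpow (by positivity) (by nlinarith [ht.1, ht.2]) hp
        exact div_le_div₀ ((cos_one_pos.le.trans (hcos t ⟨ht.1, ht.2.trans hx1⟩)))
          (hcos t ⟨ht.1, ht.2.trans hx1⟩) (rpow_pos_of_pos (sq_add_sq_pos hx.ne' t) p) hle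
    _ ≤ ∫ t in Ioc 0 1, cos t / (t ^ 2 + x ^ 2) ^ p := by
        refine setIntegral_mono_set hint ?_ (Ioc_subset_Ioc_right hx1).eventuallyLE
        filter_upwards [ae_restrict_mem measurableSet_Ioc] with t ht
        exact div_nonneg (cos_one_pos.le.trans (hcos t ht))
          (rpow_pos_of_pos (sq_add_sq_pos hx.ne' t) p).le

lemma tendsto_besselKIntegral_nhdsGT_zero {p : ℝ} (hp : 1 / 2 < p) :
    Tendsto (besselKIntegral p) (𝓝[>] 0) atTop := by
  have hlower : Tendsto (fun x : ℝ => cos 1 * 2 ^ (-p) * x ^ (1 - 2 * p) + -(2 * p - 1)⁻¹)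
      (𝓝[>] 0) atTop :=
    tendsto_atTop_add_const_right _ _ <|
      (tendsto_rpow_neg_nhdsGT_zero (y := 1 - 2 * p) (by linarith)).const_mul_atTop
        (mul_pos cos_one_pos (rpow_pos_of_pos two_pos _))
  refine tendsto_atTop_mono' _ ?_ hlower
  filter_upwards [Ioo_mem_nhdsGT one_pos] with x ⟨hx0, hx1⟩
  have hint := integrableOn_cos_div_sq_add_sq_rpow hp hx0.ne'
  rw [besselKIntegral, ← Ioc_union_Ioi_eq_Ioi zero_le_one,
    setIntegral_union (Ioc_disjoint_Ioi le_rfl) measurableSet_Ioi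
      (hint.mono_set Ioc_subset_Ioi_self) (hint.mono_set (Ioi_subset_Ioi zero_le_one))]
  exact add_le_add (le_setIntegral_Ioc_zero_one (by linarith) hx0 hx1.le)
    (neg_inv_le_setIntegral_Ioi_one hp hx0.ne')

lemma tendsto_sqrt_two_mul_abs_nhdsNE_zero :
    Tendsto (fun θ : ℝ => √(2 * |θ|)) (𝓝[≠] 0) (𝓝[>] 0) := by
  refine tendsto_nhdsWithin_iff.mpr ⟨?_, ?_⟩
  · have h := (by fun_prop : Continuous fun θ : ℝ => √(2 * |θ|)).tendsto 0
    simp only [abs_zero, mul_zero, sqrt_zero] at h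
    exact h.mono_left nhdsWithin_le_nhds
  · filter_upwards [self_mem_nhdsWithin] with θ hθ
    exact sqrt_pos.mpr (by positivity [abs_pos.mpr hθ])

lemma rpow_neg_half_mul_two_mul_sqrt_rpow {s : ℝ} (hs : 0 < s) (ν : ℝ) :
    s ^ (-(ν / 2)) * (2 * √(2 * s)) ^ ν = 2 ^ ν * 2 ^ (ν / 2) := by
  rw [mul_rpow zero_le_two (sqrt_nonneg _), sqrt_eq_rpow, ← rpow_mul (by positivity),
    mul_rpow zero_le_two hs.le, one_div_mul_eq_div, rpow_neg hs.le]
  field_simp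

lemma dlDensity_eq_mul_besselKIntegral (a : ℝ) {θ : ℝ} (hθ : θ ≠ 0) :
    dlDensity a θ = 2 ^ (1 - a) * 2 ^ ((1 - a) / 2) * Gamma (1 - a + 1 / 2) /
        (2 ^ ((1 + a) / 2) * Gamma a * √π) * besselKIntegral (1 - a + 1 / 2) √(2 * |θ|) := by
  have hpow := rpow_neg_half_mul_two_mul_sqrt_rpow (abs_pos.mpr hθ) (1 - a)
  rw [show -((1 - a) / 2) = (a - 1) / 2 by ring] at hpow
  rw [dlDensity, besselK, besselKIntegral, ← hpow]
  ring

/-- The marginal DL density is unbounded with a singularity at zero: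
`Π(θ) → ∞` as `θ → 0`. -/
theorem dlDensity_tendsto_atTop_of_lt_one (a : ℝ) (ha0 : 0 < a) (ha1 : a < 1) :
    Tendsto (fun θ : ℝ => dlDensity a θ) (nhdsWithin 0 {0}ᶜ) atTop := by
  have hp : 1 / 2 < 1 - a + 1 / 2 := by linarith
  have hC : 0 < 2 ^ (1 - a) * 2 ^ ((1 - a) / 2) * Gamma (1 - a + 1 / 2) /
      (2 ^ ((1 + a) / 2) * Gamma a * √π) := by
    have := Gamma_pos_of_pos (by linarith : 0 < 1 - a + 1 / 2)
    have := Gamma_pos_of_pos ha0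
    have := sqrt_pos.mpr pi_pos
    positivity
  refine (((tendsto_besselKIntegral_nhdsGT_zero hp).comp
    tendsto_sqrt_two_mul_abs_nhdsNE_zero).const_mul_atTop hC).congr' ?_
  filter_upwards [self_mem_nhdsWithin] with θ hθ
  exact (dlDensity_eq_mul_besselKIntegral a hθ).symm
end

section
/- Let θ ∈ ℝ have conditional distribution θ | ψ ∼ Laplace with scale ψ (density (2ψ)^{-1} e^{-|θ|/ψ}) where ψ ∼ Gamma(a, 1/2) (density ((1/2)^a/Γ(a)) ψ^{a-1} e^{-ψ/2}). Then the marginal density of θ is Π(θ) = (1/(2^{(1+a)/2} Γ(a))) |θ|^{(a-1)/2} K_{1-a}(√(2|θ|)), where K_ν is the modified Bessel function of the second kind. -/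
open Real MeasureTheory Filter Set

/-!
Substituting `s = 1 / (2ψ)` turns the Laplace–Gamma mixture into a multiple of
`∫ s^(-a) e^(-2|θ|s - 1/(4s)) ds`. The same integral comes out of Basset's integral for
`K_(1-a)(x)`: write `(t² + x²)^(-m)` as a Gamma integral `Γ(m)⁻¹ ∫ s^(m-1) e^(-(t² + x²)s) ds`,
swap the two integrations and use the Gaussian cosine transform
`∫₀^∞ cos t e^(-st²) dt = ½ √(π/s) e^(-1/(4s))`.
-/

theorem integral_cos_mul_mul_exp_neg_mul_sq {b : ℝ} (hb : 0 < b) (c : ℝ) :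
    ∫ x : ℝ, cos (c * x) * exp (-b * x ^ 2) = √(π / b) * exp (-(c ^ 2 / (4 * b))) := by
  have hb' : 0 < (b : ℂ).re := by simpa using hb
  have hre (x : ℝ) : cos (c * x) * exp (-b * x ^ 2) =
      (Complex.exp (Complex.I * c * x) * Complex.exp (-b * x ^ 2)).re := by
    rw [show Complex.I * c * x = ((c * x : ℝ) : ℂ) * Complex.I by push_cast; ring,
      show -(b : ℂ) * x ^ 2 = ((-b * x ^ 2 : ℝ) : ℂ) by push_cast; ring, ← Complex.ofReal_exp,
      Complex.re_mul_ofReal, Complex.exp_ofReal_mul_I_re]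
  have hint :
      Integrable fun x : ℝ ↦ Complex.exp (Complex.I * c * x) * Complex.exp (-b * x ^ 2) := by
    simpa [← Complex.exp_add, add_comm, mul_comm (Complex.I * c)] using
      integrable_cexp_quadratic hb' (Complex.I * c) 0
  have hcomm := Complex.reCLM.integral_comp_comm hint
  simp only [Complex.reCLM_apply] at hcomm
  rw [funext hre, hcomm, fourierIntegral_gaussian hb', sqrt_eq_rpow,
    ← Complex.ofReal_div, show (1 / 2 : ℂ) = ((1 / 2 : ℝ) : ℂ) by norm_num,
    ← Complex.ofReal_cpow (by positivity),
    show -(c : ℂ) ^ 2 / (4 * b) = ((-(c ^ 2 / (4 * b)) : ℝ) : ℂ) by push_cast; ring,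
    ← Complex.ofReal_exp, ← Complex.ofReal_mul, Complex.ofReal_re]

theorem integral_Ioi_cos_mul_mul_exp_neg_mul_sq {b : ℝ} (hb : 0 < b) (c : ℝ) :
    ∫ x in Ioi 0, cos (c * x) * exp (-b * x ^ 2) = √(π / b) / 2 * exp (-(c ^ 2 / (4 * b))) := by
  have heven (x : ℝ) : cos (c * |x|) * exp (-b * |x| ^ 2) = cos (c * x) * exp (-b * x ^ 2) := by
    rcases abs_choice x with h | h <;> simp [h]
  have h := integral_comp_abs (f := fun x ↦ cos (c * x) * exp (-b * x ^ 2))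
  simp only [heven, integral_cos_mul_mul_exp_neg_mul_sq hb] at h
  linarith

theorem rpow_mul_sqrt_pi_div {s : ℝ} (hs : 0 < s) (p : ℝ) :
    s ^ p * √(π / s) = √π * s ^ (p - 1 / 2) := by
  rw [sqrt_div' _ hs.le, sqrt_eq_rpow s, div_eq_mul_inv, ← rpow_neg hs.le, rpow_sub hs,
    rpow_neg hs.le]
  ring

theorem integrable_rpow_mul_exp_neg_mul_mul_exp_neg_mul_sq {m c : ℝ} (hm : 1 / 2 < m)
    (hc : 0 < c) :
    Integrable (Function.uncurry fun t s : ℝ ↦ s ^ (m - 1) * exp (-(c * s)) * exp (-s * t ^ 2))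
      ((volume.restrict (Ioi 0)).prod (volume.restrict (Ioi 0))) := by
  rw [integrable_prod_iff' (by apply Measurable.aestronglyMeasurable; fun_prop)]
  constructor
  · filter_upwards [ae_restrict_mem measurableSet_Ioi] with s hs
    simp only [Function.uncurry_apply_pair]
    exact (integrable_exp_neg_mul_sq hs).integrableOn.const_mul _
  · have hexp : IntegrableOn (fun s : ℝ ↦ s ^ (m - 1 / 2 - 1) * exp (-(c * s))) (Ioi 0) := by
      simpa using integrableOn_rpow_mul_exp_neg_mul_rpow (p := 1) (by linarith) one_pos hc
    refine (hexp.const_mul (√π / 2)).congr ?_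
    filter_upwards [ae_restrict_mem measurableSet_Ioi] with s (hs : 0 < s)
    have hnorm (t : ℝ) : ‖s ^ (m - 1) * exp (-(c * s)) * exp (-s * t ^ 2)‖ =
        s ^ (m - 1) * exp (-(c * s)) * exp (-s * t ^ 2) :=
      Real.norm_of_nonneg (by positivity)
    simp only [Function.uncurry_apply_pair, hnorm]
    rw [integral_const_mul, integral_gaussian_Ioi, show m - 1 / 2 - 1 = m - 1 - 1 / 2 by ring]
    linear_combination -exp (-(c * s)) / 2 * rpow_mul_sqrt_pi_div hs (m - 1)

theorem integral_Ioi_cos_div_sq_add_rpow {m c : ℝ} (hm : 1 / 2 < m) (hc : 0 < c) :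
    ∫ t in Ioi 0, cos t / (t ^ 2 + c) ^ m =
      √π / (2 * Gamma m) *
        ∫ s in Ioi 0, s ^ (m - 3 / 2) * exp (-(c * s)) * exp (-(1 / (4 * s))) := by
  set G : ℝ → ℝ → ℝ := fun t s ↦ s ^ (m - 1) * exp (-(c * s)) * exp (-s * t ^ 2)
  have hG : Integrable (Function.uncurry G)
      ((volume.restrict (Ioi 0)).prod (volume.restrict (Ioi 0))) :=
    integrable_rpow_mul_exp_neg_mul_mul_exp_neg_mul_sq hm hc
  have hF : Integrable (Function.uncurry fun t s ↦ cos t * G t s)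
      ((volume.restrict (Ioi 0)).prod (volume.restrict (Ioi 0))) := by
    refine hG.mono (by apply Measurable.aestronglyMeasurable; fun_prop) (ae_of_all _ fun p ↦ ?_)
    simp only [Function.uncurry, norm_mul]
    exact mul_le_of_le_one_left (norm_nonneg _) (abs_cos_le_one p.1)
  have hgamma (t : ℝ) : cos t / (t ^ 2 + c) ^ m = (Gamma m)⁻¹ * ∫ s in Ioi 0, cos t * G t s := by
    have hpos : 0 < t ^ 2 + c := by positivity
    have hexp (s : ℝ) : exp (-(c * s)) * exp (-s * t ^ 2) = exp (-((t ^ 2 + c) * s)) := by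
      rw [← exp_add]; ring_nf
    simp only [G, mul_assoc, hexp]
    rw [integral_const_mul, integral_rpow_mul_exp_neg_mul_Ioi (by linarith) hpos, one_div,
      inv_rpow hpos.le]
    field_simp [(Gamma_pos_of_pos (by linarith : 0 < m)).ne']
  have hinner (s : ℝ) (hs : 0 < s) : ∫ t in Ioi 0, cos t * G t s =
      √π / 2 * (s ^ (m - 3 / 2) * exp (-(c * s)) * exp (-(1 / (4 * s)))) := by
    simp only [G, mul_left_comm (cos _), integral_const_mul]
    have hcos : ∫ t in Ioi 0, cos t * exp (-s * t ^ 2) = √(π / s) / 2 * exp (-(1 / (4 * s))) := by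
      simpa using integral_Ioi_cos_mul_mul_exp_neg_mul_sq hs 1
    rw [hcos, show m - 3 / 2 = m - 1 - 1 / 2 by ring]
    linear_combination
      exp (-(c * s)) * exp (-(1 / (4 * s))) / 2 * rpow_mul_sqrt_pi_div hs (m - 1)
  calc ∫ t in Ioi 0, cos t / (t ^ 2 + c) ^ m
      = (Gamma m)⁻¹ * ∫ t in Ioi 0, ∫ s in Ioi 0, cos t * G t s := by
        simp only [hgamma, integral_const_mul]
    _ = (Gamma m)⁻¹ * ∫ s in Ioi 0, ∫ t in Ioi 0, cos t * G t s := by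
        rw [integral_integral_swap hF]
    _ = _ := by
        rw [setIntegral_congr_fun measurableSet_Ioi hinner, integral_const_mul]
        ring

theorem besselK_eq_integral {ν x : ℝ} (hν : 0 < ν) (hx : x ≠ 0) :
    besselK ν x =
      (2 * x) ^ ν / 2 * ∫ s in Ioi 0, s ^ (ν - 1) * exp (-(x ^ 2 * s)) * exp (-(1 / (4 * s))) := by
  have hΓ : Gamma (ν + 1 / 2) ≠ 0 := (Gamma_pos_of_pos (by linarith)).ne'
  have hπ : √π ≠ 0 := (sqrt_pos.2 pi_pos).ne'
  rw [besselK, integral_Ioi_cos_div_sq_add_rpow (by linarith) (by positivity),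
    show ν + 1 / 2 - 3 / 2 = ν - 1 by ring]
  set J := ∫ s in Ioi 0, s ^ (ν - 1) * exp (-(x ^ 2 * s)) * exp (-(1 / (4 * s)))
  field_simp

theorem dlDensity_eq_integral {a θ : ℝ} (ha : a < 1) (hθ : θ ≠ 0) :
    dlDensity a θ =
      2 ^ (-2 * a) / Gamma a *
        ∫ s in Ioi 0, s ^ (-a) * exp (-(2 * |θ| * s)) * exp (-(1 / (4 * s))) := by
  have hθ' : 0 < |θ| := abs_pos.2 hθ
  have hpow : |θ| ^ ((a - 1) / 2) * (2 * √(2 * |θ|)) ^ (1 - a) =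
      2 ^ ((1 + a) / 2) * 2 ^ (-2 * a) * 2 := by
    rw [sqrt_eq_rpow, mul_rpow (by norm_num) (by positivity), ← rpow_mul (by positivity),
      mul_rpow (by norm_num) hθ'.le]
    calc |θ| ^ ((a - 1) / 2) * (2 ^ (1 - a) * (2 ^ (1 / 2 * (1 - a)) * |θ| ^ (1 / 2 * (1 - a))))
        = |θ| ^ ((a - 1) / 2 + 1 / 2 * (1 - a)) * 2 ^ (1 - a + 1 / 2 * (1 - a)) := by
          rw [rpow_add hθ', rpow_add two_pos]; ring
      _ = 2 ^ ((1 + a) / 2 + -2 * a + 1) := by ring_nf; simp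
      _ = _ := by rw [rpow_add two_pos, rpow_add two_pos, rpow_one]
  rw [dlDensity, besselK_eq_integral (by linarith) (sqrt_pos.2 (by positivity)).ne',
    sq_sqrt (by positivity), show 1 - a - 1 = -a by ring]
  set J := ∫ s in Ioi 0, s ^ (-a) * exp (-(2 * |θ| * s)) * exp (-(1 / (4 * s)))
  calc 1 / (2 ^ ((1 + a) / 2) * Gamma a) * |θ| ^ ((a - 1) / 2) *
        ((2 * √(2 * |θ|)) ^ (1 - a) / 2 * J)
      = |θ| ^ ((a - 1) / 2) * (2 * √(2 * |θ|)) ^ (1 - a) / (2 ^ ((1 + a) / 2) * 2) * J /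
          Gamma a := by
        ring
    _ = 2 ^ (-2 * a) / Gamma a * J := by
        rw [hpow, mul_right_comm, mul_div_cancel_left₀ _ (by positivity)]
        ring

theorem integral_Ioi_comp_const_div {E : Type*} [NormedAddCommGroup E] [NormedSpace ℝ E]
    {k : ℝ} (hk : 0 < k) (g : ℝ → E) :
    ∫ x in Ioi 0, (k / x ^ 2) • g (k / x) = ∫ x in Ioi 0, g x := by
  calc ∫ x in Ioi 0, (k / x ^ 2) • g (k / x)
      = k • ∫ x in Ioi 0, (|(-1 : ℝ)| * x ^ ((-1 : ℝ) - 1)) • g (k * x ^ (-1 : ℝ)) := by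
        rw [← integral_smul]
        refine setIntegral_congr_fun measurableSet_Ioi fun x (hx : 0 < x) ↦ ?_
        simp only [smul_smul]
        norm_num [rpow_neg_one, div_eq_mul_inv]
    _ = ∫ x in Ioi 0, g x := by
        rw [integral_comp_rpow_Ioi (fun y ↦ g (k * y)) (by norm_num),
          integral_comp_mul_left_Ioi' g 0 hk, mul_zero]

theorem integral_Ioi_laplace_mul_gamma (a b : ℝ) :
    ∫ ψ in Ioi 0, (2 * ψ)⁻¹ * exp (-b / ψ) *
        ((1 / 2 : ℝ) ^ a / Gamma a * ψ ^ (a - 1) * exp (-ψ / 2)) =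
      2 ^ (-2 * a) / Gamma a *
        ∫ s in Ioi 0, s ^ (-a) * exp (-(2 * b * s)) * exp (-(1 / (4 * s))) := by
  rw [← integral_Ioi_comp_const_div (one_half_pos (α := ℝ)), ← integral_const_mul]
  refine setIntegral_congr_fun measurableSet_Ioi fun s (hs : 0 < s) ↦ ?_
  rw [show -b / (1 / 2 / s) = -(2 * b * s) by field_simp,
    show -(1 / 2 / s) / 2 = -(1 / (4 * s)) by field_simp; ring,
    div_rpow (by norm_num) hs.le, rpow_sub_one hs.ne', rpow_neg hs.le, rpow_sub_one (by norm_num),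
    div_rpow (by norm_num) (by norm_num), one_rpow, smul_eq_mul,
    show (2 : ℝ) ^ (-2 * a) = ((2 ^ a) ^ 2)⁻¹ by
      rw [neg_mul, rpow_neg (by norm_num), mul_comm, rpow_mul (by norm_num), rpow_two]]
  field_simp

theorem marginal_dl_density_general (a : ℝ) (ha1 : a < 1) (θ : ℝ) (hθ : θ ≠ 0) :
    ∫ ψ in Set.Ioi (0:ℝ),
        (2*ψ)⁻¹ * Real.exp (-|θ|/ψ) *
          (((1:ℝ)/2) ^ a / Real.Gamma a * ψ ^ (a-1) * Real.exp (-ψ/2)) =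
      dlDensity a θ := by
  rw [integral_Ioi_laplace_mul_gamma, dlDensity_eq_integral ha1 hθ]

/-- If `θ | ψ ∼ Laplace(ψ)` (density `(2ψ)⁻¹ e^{-|θ|/ψ}`) and `ψ ∼ Gamma(a, 1/2)`
(density `((1/2)^a/Γ(a)) ψ^{a-1} e^{-ψ/2}`), the marginal density of `θ` is
`Π(θ) = (1/(2^{(1+a)/2} Γ(a))) |θ|^{(a-1)/2} K_{1-a}(√(2|θ|))`. -/
theorem marginal_dl_density (a : ℝ) (ha0 : 0 < a) (ha1 : a < 1) (θ : ℝ) (hθ : θ ≠ 0) :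
    ∫ ψ in Set.Ioi (0:ℝ),
        (2*ψ)⁻¹ * Real.exp (-|θ|/ψ) *
          (((1:ℝ)/2) ^ a / Real.Gamma a * ψ ^ (a-1) * Real.exp (-ψ/2)) =
      dlDensity a θ :=
  marginal_dl_density_general a ha1 θ hθ
end

section
/- Let a ∈ (0,1), τ > 0, and suppose the marginal distribution of φ is Beta(1/n, 1 − 1/n). Then the marginal density of θ given τ, defined by integrating (2φτ)^{-1} e^{-|θ|/(φτ)} against the Beta(1/n, 1−1/n) density of φ over (0,1), is proportional to e^{-|θ|/τ} |θ|^{1/n − 1}, i.e., a wrapped Gamma WG(τ^{-1}, 1/n) density. -/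
/-!
Substituting `φ = 1 / (1 + s)` turns the mixture integral into `e^{-|θ|/τ}` times the Gamma
integral `∫₀^∞ s^{-1/n} e^{-s|θ|/τ} ds = Γ(1 - 1/n) (τ/|θ|)^{1 - 1/n}`, and the factor
`Γ(1 - 1/n)` cancels against the normalisation of the Beta density.
-/

open Real MeasureTheory Set

theorem image_inv_one_add_Ioi : (fun s : ℝ => (1 + s)⁻¹) '' Ioi 0 = Ioo 0 1 := by
  have h := image_const_add_Ioi (1 : ℝ) 0
  rw [add_zero] at h
  rw [show (fun s : ℝ => (1 + s)⁻¹) = Inv.inv ∘ (fun s => 1 + s) from rfl, image_comp, h,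
    image_inv_eq_inv, inv_Ioi₀ one_pos, inv_one]

theorem integral_comp_inv_one_add_Ioi {E : Type*} [NormedAddCommGroup E] [NormedSpace ℝ E]
    (f : ℝ → E) :
    ∫ s in Ioi 0, ((1 + s) ^ 2)⁻¹ • f (1 + s)⁻¹ = ∫ φ in Ioo 0 1, f φ := by
  rw [← image_inv_one_add_Ioi, integral_image_eq_integral_abs_deriv_smul measurableSet_Ioi
    (f' := fun s => -((1 + s) ^ 2)⁻¹)]
  · refine setIntegral_congr_fun measurableSet_Ioi fun s hs => ?_
    rw [abs_neg, abs_of_pos (by have : (0:ℝ) < s := hs; positivity)]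
  · intro s hs
    have hs : (0:ℝ) < 1 + s := by have : (0:ℝ) < s := hs; linarith
    have h := ((hasDerivAt_id' s).const_add 1).hasDerivWithinAt (s := Ioi 0) |>.fun_inv hs.ne'
    rwa [neg_div, one_div] at h
  · intro s _ u _ h
    simpa using h

theorem integral_Ioo_rpow_mul_rpow_mul_exp_neg_div {r c : ℝ} (hr : r < 1) (hc : 0 < c) :
    ∫ φ in Ioo 0 1, φ ^ (r - 2) * (1 - φ) ^ (-r) * exp (-c / φ)
      = exp (-c) * (1 / c) ^ (1 - r) * Gamma (1 - r) := by
  have hintegrand : ∀ s ∈ Ioi (0:ℝ),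
      ((1 + s) ^ 2)⁻¹ • ((1 + s)⁻¹ ^ (r - 2) * (1 - (1 + s)⁻¹) ^ (-r) * exp (-c / (1 + s)⁻¹))
        = exp (-c) * (s ^ ((1 - r) - 1) * exp (-(c * s))) := by
    intro s hs
    have hs : (0:ℝ) < s := hs
    have h1 : (0:ℝ) < 1 + s := by linarith
    have hsub : 1 - (1 + s)⁻¹ = s * (1 + s)⁻¹ := by field_simp; ring
    have hexp : exp (-c * (1 + s)) = exp (-c) * exp (-(c * s)) := by rw [← exp_add]; ring_nf
    have hpow : (1 + s) ^ (r - 2) * (1 + s) ^ (-r) = ((1 + s) ^ 2)⁻¹ := by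
      rw [← rpow_add h1, ← rpow_natCast, ← rpow_neg h1.le]
      ring_nf
    rw [smul_eq_mul, hsub, mul_rpow hs.le (by positivity), inv_rpow h1.le, inv_rpow h1.le,
      div_inv_eq_mul, show 1 - r - 1 = -r by ring, hexp, ← hpow]
    field_simp
  rw [← integral_comp_inv_one_add_Ioi, setIntegral_congr_fun measurableSet_Ioi hintegrand,
    integral_const_mul, integral_rpow_mul_exp_neg_mul_Ioi (by linarith) hc, mul_assoc]

theorem integral_laplace_mul_beta_density {r τ t : ℝ} (hr : r < 1) (hτ : 0 < τ) (ht : 0 < t) :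
    ∫ φ in Ioo (0:ℝ) 1, (2 * φ * τ)⁻¹ * exp (-t / (φ * τ)) *
        (1 / (Gamma r * Gamma (1 - r)) * φ ^ (r - 1) * (1 - φ) ^ (-r))
      = τ ^ (-r) / (2 * Gamma r) * exp (-t / τ) * t ^ (r - 1) := by
  have hintegrand : ∀ φ ∈ Ioo (0:ℝ) 1,
      (2 * φ * τ)⁻¹ * exp (-t / (φ * τ)) *
        (1 / (Gamma r * Gamma (1 - r)) * φ ^ (r - 1) * (1 - φ) ^ (-r))
      = (2 * τ * Gamma r * Gamma (1 - r))⁻¹ *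
          (φ ^ (r - 2) * (1 - φ) ^ (-r) * exp (-(t / τ) / φ)) := by
    intro φ hφ
    rw [show r - 2 = (r - 1) + -1 by ring, rpow_add hφ.1, rpow_neg_one,
      show -(t / τ) / φ = -t / (φ * τ) by field_simp]
    ring
  have hΓ : Gamma (1 - r) ≠ 0 := (Gamma_pos_of_pos (by linarith)).ne'
  have hτpow : τ ^ (1 - r) = τ * τ ^ (-r) := by
    rw [sub_eq_add_neg, rpow_add hτ, rpow_one]
  rw [setIntegral_congr_fun measurableSet_Ioo hintegrand, integral_const_mul,
    integral_Ioo_rpow_mul_rpow_mul_exp_neg_div hr (div_pos ht hτ), one_div_div,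
    div_rpow hτ.le ht.le, hτpow, show r - 1 = -(1 - r) by ring, rpow_neg ht.le, neg_div]
  field_simp

/-- If `φ ∼ Beta(1/n, 1 − 1/n)` and `θ | φ, τ ∼ Laplace(φτ)`, then the marginal
density of `θ` given `τ` is proportional to `e^{-|θ|/τ} |θ|^{1/n − 1}`, i.e. a
wrapped Gamma `WG(τ⁻¹, 1/n)` density. -/
theorem marginal_wrapped_gamma (n : ℕ) (hn : 2 ≤ n) (τ : ℝ) (hτ : 0 < τ) :
    ∃ C > 0, ∀ θ : ℝ, θ ≠ 0 →
      ∫ φ in Set.Ioo (0:ℝ) 1,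
          (2*φ*τ)⁻¹ * Real.exp (-|θ|/(φ*τ)) *
            (1 / (Real.Gamma (1/n) * Real.Gamma (1 - 1/n)) *
              φ ^ ((1:ℝ)/n - 1) * (1-φ) ^ (-(1:ℝ)/n)) =
        C * Real.exp (-|θ|/τ) * |θ| ^ ((1:ℝ)/n - 1) := by
  have hn' : (2:ℝ) ≤ n := by exact_mod_cast hn
  have hr1 : (1:ℝ) / n < 1 := by rw [div_lt_one (by linarith)]; linarith
  refine ⟨τ ^ (-(1 / n : ℝ)) / (2 * Gamma (1 / n)), by positivity, fun θ hθ => ?_⟩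
  rw [neg_div]
  exact integral_laplace_mul_beta_density hr1 hτ (abs_pos.mpr hθ)
end

section
/- For δ > 0 small and a ∈ (0,1), if θ has density Π(θ) = ((1/2)^a/Γ(a)) ∫_0^∞ e^{-|θ|/ψ} (2ψ)^{-1} ψ^{a−1} e^{-ψ/2} dψ, then P(|θ| > δ) ≤ C log(1/δ)/Γ(a) for an absolute constant C > 0 (not depending on a or δ). -/
open Real MeasureTheory Set

/-!
Write `f(x) = e^{-δ/x} x^{a-1} e^{-x/2}` and split `(0, ∞)` at `δ` and `1`. Since `a ∈ (0, 1)`,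
`x^{a-1} ≤ x⁻¹` on `(0, 1]` and `x^{a-1} ≤ 1` on `[1, ∞)`. On `(0, δ]` the factor `e^{-δ/x}`
tames the singularity: `e^{-δ/x} x⁻¹ = (δ/x) e^{-δ/x} / δ ≤ e⁻¹/δ`, contributing at most `e⁻¹`.
On `(δ, 1]` we use `f ≤ x⁻¹`, contributing `log(1/δ)`, and on `(1, ∞)` we use `f ≤ e^{-x/2}`,
contributing at most `2`. Finally `(1/2)^a ≤ 1`, and `e⁻¹ + 2 ≤ 3 log(1/δ)` once `δ < e⁻¹`.
-/

noncomputable def tailIntegrand (a δ x : ℝ) : ℝ :=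
  exp (-δ / x) * x ^ (a - 1) * exp (-x / 2)

section TailIntegrand

variable {a δ : ℝ}

lemma tailIntegrand_nonneg (a δ : ℝ) {x : ℝ} (hx : 0 ≤ x) : 0 ≤ tailIntegrand a δ x := by
  unfold tailIntegrand; positivity

lemma measurable_tailIntegrand (a δ : ℝ) : Measurable (tailIntegrand a δ) := by
  unfold tailIntegrand; fun_prop

lemma tailIntegrand_le_exp_neg_div_mul_inv (ha : 0 ≤ a) {x : ℝ} (hx0 : 0 < x) (hx1 : x ≤ 1) :
    tailIntegrand a δ x ≤ exp (-δ / x) * x⁻¹ := by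
  have hpow : x ^ (a - 1) ≤ x⁻¹ := by
    rw [← rpow_neg_one]; exact rpow_le_rpow_of_exponent_ge hx0 hx1 (by linarith)
  have hexp : exp (-x / 2) ≤ 1 := exp_le_one_iff.2 (by linarith)
  calc tailIntegrand a δ x ≤ exp (-δ / x) * x⁻¹ * 1 := by
        unfold tailIntegrand; gcongr
    _ = exp (-δ / x) * x⁻¹ := mul_one _

lemma tailIntegrand_le_inv (ha : 0 ≤ a) (hδ : 0 ≤ δ) {x : ℝ} (hx0 : 0 < x) (hx1 : x ≤ 1) :
    tailIntegrand a δ x ≤ x⁻¹ := by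
  have hexp : exp (-δ / x) ≤ 1 :=
    exp_le_one_iff.2 (div_nonpos_of_nonpos_of_nonneg (by linarith) hx0.le)
  calc tailIntegrand a δ x ≤ exp (-δ / x) * x⁻¹ := tailIntegrand_le_exp_neg_div_mul_inv ha hx0 hx1
    _ ≤ 1 * x⁻¹ := by gcongr
    _ = x⁻¹ := one_mul _

lemma tailIntegrand_le_exp_neg_one_div (ha : 0 ≤ a) (hδ : 0 < δ) {x : ℝ} (hx0 : 0 < x)
    (hx1 : x ≤ 1) : tailIntegrand a δ x ≤ exp (-1) / δ := by
  calc tailIntegrand a δ x ≤ exp (-δ / x) * x⁻¹ := tailIntegrand_le_exp_neg_div_mul_inv ha hx0 hx1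
    _ = δ / x * exp (-(δ / x)) / δ := by field_simp
    _ ≤ exp (-1) / δ := by gcongr; exact mul_exp_neg_le_exp_neg_one _

lemma tailIntegrand_le_exp_neg_half_mul (ha : a ≤ 1) (hδ : 0 ≤ δ) {x : ℝ} (hx : 1 ≤ x) :
    tailIntegrand a δ x ≤ exp (-(1 / 2) * x) := by
  have hx0 : 0 < x := one_pos.trans_le hx
  have hexp : exp (-δ / x) ≤ 1 :=
    exp_le_one_iff.2 (div_nonpos_of_nonpos_of_nonneg (by linarith) hx0.le)
  have hpow : x ^ (a - 1) ≤ 1 := rpow_le_one_of_one_le_of_nonpos hx (by linarith)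
  calc tailIntegrand a δ x ≤ 1 * 1 * exp (-x / 2) := by unfold tailIntegrand; gcongr
    _ = exp (-(1 / 2) * x) := by ring_nf

lemma integrableOn_tailIntegrand (ha0 : 0 ≤ a) (ha1 : a ≤ 1) (hδ : 0 < δ) :
    IntegrableOn (tailIntegrand a δ) (Ioi 0) := by
  have hmeas : ∀ s, AEStronglyMeasurable (tailIntegrand a δ) (volume.restrict s) :=
    fun _ => (measurable_tailIntegrand a δ).aestronglyMeasurable
  rw [← Ioc_union_Ioi_eq_Ioi zero_le_one]
  refine IntegrableOn.union ?_ ?_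
  · refine IntegrableOn.of_bound (by simp) (hmeas _) (exp (-1) / δ) ?_
    refine ae_restrict_of_forall_mem measurableSet_Ioc fun x hx => ?_
    rw [norm_of_nonneg (tailIntegrand_nonneg a δ hx.1.le)]
    exact tailIntegrand_le_exp_neg_one_div ha0 hδ hx.1 hx.2
  · refine (exp_neg_integrableOn_Ioi 1 one_half_pos).mono' (hmeas _) ?_
    refine ae_restrict_of_forall_mem measurableSet_Ioi fun x hx => ?_
    rw [norm_of_nonneg (tailIntegrand_nonneg a δ (zero_le_one.trans hx.le))]
    exact tailIntegrand_le_exp_neg_half_mul ha1 hδ.le hx.le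

lemma setIntegral_Ioc_zero_tailIntegrand_le (ha : 0 ≤ a) (hδ : 0 < δ) (hδ1 : δ ≤ 1) :
    ∫ x in Ioc 0 δ, tailIntegrand a δ x ≤ exp (-1) := by
  calc ∫ x in Ioc 0 δ, tailIntegrand a δ x ≤ ∫ _ in Ioc 0 δ, exp (-1) / δ :=
        setIntegral_mono_of_nonneg (fun x hx => tailIntegrand_nonneg a δ hx.1.le)
          (fun x hx => tailIntegrand_le_exp_neg_one_div ha hδ hx.1 (hx.2.trans hδ1))
          (integrableOn_const (by simp))
    _ = exp (-1) := by
        rw [setIntegral_const, volume_real_Ioc_of_le hδ.le, sub_zero, smul_eq_mul]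
        field_simp

lemma setIntegral_Ioc_tailIntegrand_le_log (ha : 0 ≤ a) (hδ : 0 < δ) (hδ1 : δ ≤ 1) :
    ∫ x in Ioc δ 1, tailIntegrand a δ x ≤ log (1 / δ) := by
  have hinv : IntervalIntegrable (fun x : ℝ => x⁻¹) volume δ 1 := by
    rw [intervalIntegrable_inv_iff]
    exact Or.inr fun h => by simp [uIcc_of_le hδ1] at h; linarith
  calc ∫ x in Ioc δ 1, tailIntegrand a δ x ≤ ∫ x in Ioc δ 1, x⁻¹ :=
        setIntegral_mono_of_nonneg (fun x hx => tailIntegrand_nonneg a δ (hδ.trans hx.1).le)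
          (fun x hx => tailIntegrand_le_inv ha hδ.le (hδ.trans hx.1) hx.2) hinv.1
    _ = log (1 / δ) := by
        rw [← intervalIntegral.integral_of_le hδ1, integral_inv_of_pos hδ one_pos]

lemma setIntegral_Ioi_one_tailIntegrand_le (ha : a ≤ 1) (hδ : 0 ≤ δ) :
    ∫ x in Ioi 1, tailIntegrand a δ x ≤ 2 := by
  calc ∫ x in Ioi 1, tailIntegrand a δ x ≤ ∫ x in Ioi 1, exp (-(1 / 2) * x) :=
        setIntegral_mono_of_nonneg
          (fun x hx => tailIntegrand_nonneg a δ (zero_le_one.trans (le_of_lt hx)))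
          (fun x hx => tailIntegrand_le_exp_neg_half_mul ha hδ (le_of_lt hx))
          (exp_neg_integrableOn_Ioi 1 one_half_pos)
    _ = 2 * exp (-(1 / 2)) := by rw [integral_exp_mul_Ioi (by norm_num)]; ring_nf
    _ ≤ 2 := by linarith [exp_le_one_iff.2 (by norm_num : -(1 / 2 : ℝ) ≤ 0)]

lemma integral_tailIntegrand_le (ha0 : 0 ≤ a) (ha1 : a ≤ 1) (hδ : 0 < δ) (hδ1 : δ ≤ 1) :
    ∫ x in Ioi 0, tailIntegrand a δ x ≤ exp (-1) + log (1 / δ) + 2 := by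
  have hf := integrableOn_tailIntegrand ha0 ha1 hδ
  have hf01 : IntegrableOn (tailIntegrand a δ) (Ioc 0 1) := hf.mono_set Ioc_subset_Ioi_self
  rw [← Ioc_union_Ioi_eq_Ioi zero_le_one, setIntegral_union Ioc_disjoint_Ioi_same
      measurableSet_Ioi hf01 (hf.mono_set (Ioi_subset_Ioi zero_le_one)),
    ← Ioc_union_Ioc_eq_Ioc hδ.le hδ1,
    setIntegral_union (Ioc_disjoint_Ioc_of_le le_rfl) measurableSet_Ioc
      (hf01.mono_set (Ioc_subset_Ioc_right hδ1)) (hf01.mono_set (Ioc_subset_Ioc_left hδ.le))]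
  linarith [setIntegral_Ioc_zero_tailIntegrand_le ha0 hδ hδ1,
    setIntegral_Ioc_tailIntegrand_le_log ha0 hδ hδ1, setIntegral_Ioi_one_tailIntegrand_le ha1 hδ.le]

end TailIntegrand

/-- Under the hierarchy `θ | ψ ∼ Laplace(ψ)`, `ψ ∼ Gamma(a, 1/2)`, so that
`P(|θ| > δ) = ((1/2)^a/Γ(a)) ∫_0^∞ e^{-δ/x} x^{a−1} e^{-x/2} dx`, one has
`P(|θ| > δ) ≤ C log(1/δ)/Γ(a)` for small `δ > 0`, where `C` is an absolute
constant not depending on `a` or `δ`. -/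
theorem dl_tail_bound :
    ∃ C > 0, ∃ δ₀ > 0, ∀ a : ℝ, 0 < a → a < 1 → ∀ δ : ℝ, 0 < δ → δ < δ₀ →
      ((1:ℝ)/2) ^ a / Real.Gamma a *
          ∫ x in Set.Ioi (0:ℝ), Real.exp (-δ/x) * x ^ (a-1) * Real.exp (-x/2) ≤
        C * Real.log (1/δ) / Real.Gamma a := by
  refine ⟨4, by norm_num, exp (-1), exp_pos _, fun a ha0 ha1 δ hδ hδe => ?_⟩
  have hδ1 : δ ≤ 1 := hδe.le.trans (exp_le_one_iff.2 (by norm_num))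
  have hlog : 1 < log (1 / δ) := by
    rw [one_div, log_inv, lt_neg, ← log_exp (-1)]; exact log_lt_log hδ hδe
  have hI := integral_tailIntegrand_le ha0.le ha1.le hδ hδ1
  have hI0 : 0 ≤ ∫ x in Ioi 0, tailIntegrand a δ x :=
    setIntegral_nonneg measurableSet_Ioi fun x hx => tailIntegrand_nonneg a δ (le_of_lt hx)
  have hpow : ((1:ℝ) / 2) ^ a ≤ 1 := rpow_le_one (by norm_num) (by norm_num) ha0.le
  rw [div_mul_eq_mul_div, div_le_div_iff_of_pos_right (Gamma_pos_of_pos ha0)]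
  calc ((1:ℝ) / 2) ^ a * ∫ x in Ioi 0, tailIntegrand a δ x
      ≤ 1 * ∫ x in Ioi 0, tailIntegrand a δ x := by gcongr
    _ ≤ 4 * log (1 / δ) := by linarith [exp_le_one_iff.2 (by norm_num : (-1 : ℝ) ≤ 0)]
end
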